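/- Let g ≥ 2, let S_g = ⟨a₁, b₁, …, a_g, b_g ∣ [a₁,b₁][a₂,b₂]⋯[a_g,b_g] = 1⟩ be the fundamental group of the closed orientable surface of genus g, and let M ∈ GL(2, ℤ) with det M = 1. Let G_M = ℤ² ⋊_M ℤ be the semidirect product in which the generator of ℤ acts on ℤ² by M. Then every group homomorphism f : S_g → G_M has nontrivial kernel. -/

import Mathlib

open Matrix
open scoped commutatorElement

/-- The additive automorphism of `ℤ²` given by an invertible integer matrix. -/
def matrixAddAut (M : GL (Fin 2) ℤ) : (Fin 2 → ℤ) ≃+ (Fin 2 → ℤ) where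
  toFun v := (M : Matrix (Fin 2) (Fin 2) ℤ).mulVec v
  invFun v := (↑M⁻¹ : Matrix (Fin 2) (Fin 2) ℤ).mulVec v
  left_inv v := by
    dsimp only
    rw [Matrix.mulVec_mulVec, ← Matrix.GeneralLinearGroup.coe_mul]
    simp
  right_inv v := by
    dsimp only
    rw [Matrix.mulVec_mulVec, ← Matrix.GeneralLinearGroup.coe_mul]
    simp
  map_add' u v := by simp [Matrix.mulVec_add]

/-- The action of `ℤ` on `ℤ²` in which the generator `1` acts by the matrix `M`. -/
def torusBundleAction (M : GL (Fin 2) ℤ) :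
    Multiplicative ℤ →* MulAut (Multiplicative (Fin 2 → ℤ)) :=
  zpowersHom _ (AddEquiv.toMultiplicative (matrixAddAut M))

/-- The fundamental group `G_M = ℤ² ⋊_M ℤ` of the torus bundle over `S¹` with
monodromy `M`. -/
abbrev TorusBundleGroup (M : GL (Fin 2) ℤ) : Type :=
  SemidirectProduct (Multiplicative (Fin 2 → ℤ)) (Multiplicative ℤ) (torusBundleAction M)

/-- The projection `G_M → ℤ` onto the `ℤ` factor. -/
def torusBundleProj (M : GL (Fin 2) ℤ) (x : TorusBundleGroup M) : ℤ :=
  (SemidirectProduct.rightHom x).toAdd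

/-- The single relator `[a₁,b₁][a₂,b₂]⋯[a_g,b_g]` of the fundamental group of the
closed orientable surface of genus `g`; here `Sum.inl i` is the generator `aᵢ` and
`Sum.inr i` is the generator `bᵢ`. -/
def orientableSurfaceRels (g : ℕ) : Set (FreeGroup (Fin g ⊕ Fin g)) :=
  {(List.ofFn fun i : Fin g =>
      ⁅(FreeGroup.of (Sum.inl i) : FreeGroup (Fin g ⊕ Fin g)), FreeGroup.of (Sum.inr i)⁆).prod}

/-- The fundamental group `S_g = ⟨a₁, b₁, …, a_g, b_g ∣ [a₁,b₁]⋯[a_g,b_g] = 1⟩` of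
the closed orientable surface of genus `g`. -/
abbrev OrientableSurfaceGroup (g : ℕ) : Type :=
  PresentedGroup (orientableSurfaceRels g)

/-!
`G_M` is metabelian: commutators lie in the abelian normal subgroup `ℤ²`, so every homomorphism
into `G_M` kills all double commutators `⁅⁅x, y⁆, ⁅z, w⁆⁆`. For `g ≥ 2` the surface group is not
metabelian: sending `a₁, b₁, a₂, b₂` to `x, y, y, x` and the other generators to `1` respects the
relator for any `x, y` in any group, and with a 5-cycle and a transposition in `S₅` the image of
`⁅⁅a₁, b₁⁆, ⁅a₁⁻¹, b₁⁆⁆` is nontrivial.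
-/

namespace SemidirectProduct

variable {N H : Type*} [CommGroup N] [CommGroup H] {φ : H →* MulAut N}

theorem commutatorElement_mem_range_inl (a b : N ⋊[φ] H) :
    ⁅a, b⁆ ∈ (inl : N →* N ⋊[φ] H).range := by
  rw [range_inl_eq_ker_rightHom, MonoidHom.mem_ker, map_commutatorElement,
    commutatorElement_eq_one_iff_mul_comm, mul_comm]

theorem commute_commutatorElement (a b c d : N ⋊[φ] H) : Commute ⁅a, b⁆ ⁅c, d⁆ := by
  obtain ⟨u, hu⟩ := commutatorElement_mem_range_inl a b
  obtain ⟨v, hv⟩ := commutatorElement_mem_range_inl c d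
  rw [← hu, ← hv]
  exact (Commute.all u v).map inl

end SemidirectProduct

namespace OrientableSurfaceGroup

variable {n : ℕ} {G : Type*} [Group G]

def genA {g : ℕ} (i : Fin g) : OrientableSurfaceGroup g := PresentedGroup.of (Sum.inl i)

def genB {g : ℕ} (i : Fin g) : OrientableSurfaceGroup g := PresentedGroup.of (Sum.inr i)

def pairGens (x y : G) : Fin (n + 2) ⊕ Fin (n + 2) → G :=
  Sum.elim (Fin.cons x (Fin.cons y 1)) (Fin.cons y (Fin.cons x 1))

theorem lift_pairGens_rels (x y : G) :
    ∀ r ∈ orientableSurfaceRels (n + 2), FreeGroup.lift (pairGens x y) r = 1 := by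
  rintro r rfl
  simp [map_list_prod, List.map_ofFn, List.ofFn_succ, Function.comp_def, pairGens,
    commutatorElement_def, mul_assoc]

def pairHom (x y : G) : OrientableSurfaceGroup (n + 2) →* G :=
  PresentedGroup.toGroup (lift_pairGens_rels x y)

@[simp]
theorem pairHom_genA_zero (x y : G) : pairHom (n := n) x y (genA 0) = x := by
  simp [pairHom, pairGens, genA]

@[simp]
theorem pairHom_genB_zero (x y : G) : pairHom (n := n) x y (genB 0) = y := by
  simp [pairHom, pairGens, genB]

set_option maxRecDepth 4000 in
theorem perm_commutatorElement_commutatorElement_ne_one :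
    ⁅⁅finRotate 5, Equiv.swap (0 : Fin 5) 1⁆, ⁅(finRotate 5)⁻¹, Equiv.swap (0 : Fin 5) 1⁆⁆ ≠ 1 := by
  decide

theorem commutatorElement_commutatorElement_ne_one :
    ⁅⁅genA (0 : Fin (n + 2)), genB (0 : Fin (n + 2))⁆,
      ⁅(genA (0 : Fin (n + 2)))⁻¹, genB (0 : Fin (n + 2))⁆⁆ ≠ 1 := by
  intro h
  apply perm_commutatorElement_commutatorElement_ne_one
  simpa [map_commutatorElement] using
    congrArg (pairHom (finRotate 5) (Equiv.swap 0 1)) h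

end OrientableSurfaceGroup

theorem surface_group_hom_to_torus_bundle_not_injective_general (g : ℕ) (hg : 2 ≤ g)
    (M : GL (Fin 2) ℤ)
    (f : OrientableSurfaceGroup g →* TorusBundleGroup M) :
    ∃ x : OrientableSurfaceGroup g, x ≠ 1 ∧ f x = 1 := by
  obtain ⟨n, rfl⟩ := Nat.exists_eq_add_of_le' hg
  refine ⟨_, OrientableSurfaceGroup.commutatorElement_commutatorElement_ne_one, ?_⟩
  simp only [map_commutatorElement]
  exact commutatorElement_eq_one_iff_commute.2
    (SemidirectProduct.commute_commutatorElement _ _ _ _)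

/-- If `g ≥ 2` and `det M = 1`, then every homomorphism from the genus-`g` surface
group to the fundamental group of the torus bundle with monodromy `M` has
nontrivial kernel. -/
theorem surface_group_hom_to_torus_bundle_not_injective (g : ℕ) (hg : 2 ≤ g)
    (M : GL (Fin 2) ℤ) (hM : (M : Matrix (Fin 2) (Fin 2) ℤ).det = 1)
    (f : OrientableSurfaceGroup g →* TorusBundleGroup M) :
    ∃ x : OrientableSurfaceGroup g, x ≠ 1 ∧ f x = 1 :=
  surface_group_hom_to_torus_bundle_not_injective_general g hg M f
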